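/- Let Ψ be a partition of ℝ^d into cells each of diameter at most ε, let A ⊆ ℝ^d be finite, q : A → Ψ the map sending each point to its cell, and Q_1 = q(Čech_1(A)) the snap complex. If α is a p-cycle in Q_1 and γ, γ' are two p-cycles in Čech_1(A) with q(γ) = q(γ') = α, then γ and γ' are homologous in Čech_{1+ε}(A) (with ℤ/2ℤ coefficients). -/

import Mathlib

/-- The radius of the smallest closed ball enclosing `B`. -/
noncomputable def encRad {d : ℕ} (B : Finset (EuclideanSpace ℝ (Fin d))) : ℝ :=
  sInf {r | ∃ x, ∀ b ∈ B, dist b x ≤ r}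

/-- The Čech complex of `A ⊆ ℝ^d` at scale `r`: nonempty subsets of `A` such that the closed
balls of radius `r` around the points have a common point. -/
def cech (d : ℕ) (r : ℝ) (A : Finset (EuclideanSpace ℝ (Fin d))) :
    Set (Finset (EuclideanSpace ℝ (Fin d))) :=
  {B | B.Nonempty ∧ ↑B ⊆ (↑A : Set (EuclideanSpace ℝ (Fin d))) ∧ ∃ x, ∀ b ∈ B, dist b x ≤ r}

/-- `Ψ` is a partition of `ℝ^d` into cells of diameter at most `ε`. -/
def IsPartitionMesh (d : ℕ) (ε : ℝ) (Ψ : Set (Set (EuclideanSpace ℝ (Fin d)))) : Prop :=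
  (∀ x, ∃! ψ, ψ ∈ Ψ ∧ x ∈ ψ) ∧ ∀ ψ ∈ Ψ, EMetric.diam ψ ≤ ENNReal.ofReal ε

attribute [local instance] Classical.propDecidable

/-- The mod-2 simplicial boundary operator on formal sums of finite vertex sets. -/
noncomputable def bdry (V : Type*) [DecidableEq V] :
    (Finset V →₀ ZMod 2) →ₗ[ZMod 2] (Finset V →₀ ZMod 2) :=
  Finsupp.lsum (ZMod 2) fun σ =>
    LinearMap.toSpanSingleton (ZMod 2) _ (∑ v ∈ σ, Finsupp.single (σ.erase v) (1 : ZMod 2))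

/-- Chains supported on the `p`-simplices (sets of `p+1` vertices) of `K`. -/
noncomputable def chainsIn {V : Type*} (K : Set (Finset V)) (p : ℕ) :
    Submodule (ZMod 2) (Finset V →₀ ZMod 2) :=
  Finsupp.supported (ZMod 2) (ZMod 2) {σ | σ ∈ K ∧ σ.card = p + 1}

noncomputable def cyclesIn {V : Type*} [DecidableEq V] (K : Set (Finset V)) (p : ℕ) :
    Submodule (ZMod 2) (Finset V →₀ ZMod 2) :=
  chainsIn K p ⊓ LinearMap.ker (bdry V)

noncomputable def bdriesIn {V : Type*} [DecidableEq V] (K : Set (Finset V)) (p : ℕ) :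
    Submodule (ZMod 2) (Finset V →₀ ZMod 2) :=
  Submodule.map (bdry V) (chainsIn K (p + 1))

/-- The `p`-th persistent Betti number of `K ⊆ L`: the rank of the image of
`H_p(K) → H_p(L)`, computed as `Z_p(K) / (Z_p(K) ∩ B_p(L))`. -/
noncomputable def pBetti {V : Type*} [DecidableEq V] (K L : Set (Finset V)) (p : ℕ) : Cardinal :=
  Module.rank (ZMod 2) ↥(Submodule.map (bdriesIn L p).mkQ (cyclesIn K p))

noncomputable def betti {V : Type*} [DecidableEq V] (K : Set (Finset V)) (p : ℕ) : Cardinal :=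
  pBetti K K p

/-- Pushforward of a `p`-chain along a vertex map; degenerate simplices are dropped and
coinciding images cancel mod 2. -/
noncomputable def pushChain {V W : Type*} [DecidableEq V] [DecidableEq W]
    (q : V → W) (p : ℕ) (c : Finset V →₀ ZMod 2) : Finset W →₀ ZMod 2 :=
  Finsupp.filter (fun τ => τ.card = p + 1)
    (Finsupp.mapDomain (fun σ : Finset V => σ.image q) c)

/-- Gluing vertices `x` and `y` of a `p`-chain to a new vertex `z`. -/
noncomputable def glueChain {V : Type*} [DecidableEq V] (x y z : V) (p : ℕ)
    (c : Finset V →₀ ZMod 2) : Finset V →₀ ZMod 2 :=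
  pushChain (fun v => if v = x ∨ v = y then z else v) p c

/-- The star of a vertex in a chain: the simplices of the chain containing it. -/
noncomputable def starChain {V : Type*} (x : V) (c : Finset V →₀ ZMod 2) :
    Finset V →₀ ZMod 2 :=
  Finsupp.filter (fun σ => x ∈ σ) c

/-- The cone over a chain with apex `z`. -/
noncomputable def coneChain {V : Type*} [DecidableEq V] (z : V) (c : Finset V →₀ ZMod 2) :
    Finset V →₀ ZMod 2 :=
  Finsupp.mapDomain (insert z) c


section Helpers
variable {V : Type*} [DecidableEq V] {W : Type*} [DecidableEq W]

lemma addSelf {M : Type*} [AddCommMonoid M] [Module (ZMod 2) M] (a : M) : a + a = 0 := by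
  have h : (2 : ZMod 2) • a = 0 := by rw [show (2 : ZMod 2) = 0 by decide, zero_smul]
  rwa [two_smul] at h

lemma bdry_single (σ : Finset V) :
    bdry V (Finsupp.single σ (1 : ZMod 2)) =
      ∑ v ∈ σ, Finsupp.single (σ.erase v) (1 : ZMod 2) := by
  unfold bdry
  rw [Finsupp.lsum_single, LinearMap.toSpanSingleton_apply, one_smul]

noncomputable def filterL (pr : Finset V → Prop) :
    (Finset V →₀ ZMod 2) →ₗ[ZMod 2] (Finset V →₀ ZMod 2) where
  toFun := Finsupp.filter pr
  map_add' _ _ := Finsupp.filter_add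
  map_smul' m c := by
    ext a
    simp only [Finsupp.filter_apply, Finsupp.smul_apply, RingHom.id_apply]
    split <;> simp

lemma filterL_apply (pr : Finset V → Prop) (c : Finset V →₀ ZMod 2) :
    filterL pr c = Finsupp.filter pr c := rfl

noncomputable def pushL (q : V → W) (p : ℕ) :
    (Finset V →₀ ZMod 2) →ₗ[ZMod 2] (Finset W →₀ ZMod 2) :=
  (filterL (fun τ : Finset W => τ.card = p + 1)).comp
    (Finsupp.lmapDomain (ZMod 2) (ZMod 2) (fun σ : Finset V => σ.image q))

lemma pushL_apply (q : V → W) (p : ℕ) (c : Finset V →₀ ZMod 2) :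
    pushL q p c = pushChain q p c := by
  unfold pushL pushChain
  rw [LinearMap.comp_apply, Finsupp.lmapDomain_apply, filterL_apply]
  congr!

lemma filterL_single (pr : Finset V → Prop) (a : Finset V) (b : ZMod 2) :
    filterL pr (Finsupp.single a b) = if pr a then Finsupp.single a b else 0 := by
  rw [filterL_apply]
  split_ifs with h
  · exact Finsupp.filter_single_of_pos _ h
  · exact Finsupp.filter_single_of_neg _ h

lemma pushL_single (q : V → W) (p : ℕ) (σ : Finset V) :
    pushL q p (Finsupp.single σ (1 : ZMod 2)) =
      if (σ.image q).card = p + 1 then Finsupp.single (σ.image q) (1 : ZMod 2) else 0 := by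
  unfold pushL
  rw [LinearMap.comp_apply, Finsupp.lmapDomain_apply, Finsupp.mapDomain_single, filterL_single]
  congr!

lemma mapDomL_single (h : Finset V → Finset V) (a : Finset V) (b : ZMod 2) :
    Finsupp.lmapDomain (ZMod 2) (ZMod 2) h (Finsupp.single a b) = Finsupp.single (h a) b := by
  rw [Finsupp.lmapDomain_apply, Finsupp.mapDomain_single]

lemma bdry_bdry (c : Finset V →₀ ZMod 2) : bdry V (bdry V c) = 0 := by
  induction c using Finsupp.induction with
  | zero => simp
  | single_add a b f _ hb ih =>
      rw [map_add, map_add, ih, add_zero]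
      have hb1 : b = 1 := by revert hb; revert b; decide
      subst hb1
      rw [bdry_single, map_sum]
      have : ∀ v ∈ a, bdry V (Finsupp.single (a.erase v) (1 : ZMod 2)) =
          ∑ w ∈ a.erase v, Finsupp.single ((a.erase v).erase w) (1 : ZMod 2) :=
        fun v _ => bdry_single _
      rw [Finset.sum_congr rfl this, Finset.sum_sigma' a (fun v => a.erase v)]
      refine Finset.sum_involution (fun z _ => ⟨z.2, z.1⟩) ?_ ?_ ?_ ?_
      · intro z _
        rw [Finset.erase_right_comm]
        exact addSelf _
      · intro z hz _
        rw [Finset.mem_sigma] at hz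
        intro heq
        have : z.2 = z.1 := congrArg Sigma.fst heq
        exact (Finset.mem_erase.mp hz.2).1 (this ▸ rfl)
      · intro z hz
        rw [Finset.mem_sigma] at hz ⊢
        have h2 := Finset.mem_erase.mp hz.2
        exact ⟨h2.2, Finset.mem_erase.mpr ⟨fun h => h2.1 h.symm, hz.1⟩⟩
      · intro z _; rfl

end Helpers

section Glue
variable {V : Type*} [DecidableEq V]

lemma image_glue_not_mem {x y : V} {σ : Finset V} (hx : x ∉ σ) :
    σ.image (fun v => if v = x ∨ v = y then y else v) = σ := by
  rw [Finset.image_congr (g := id), Finset.image_id]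
  intro v hv
  simp only [id]
  split_ifs with h
  · rcases h with h | h
    · exact absurd (h ▸ hv) hx
    · exact h.symm
  · rfl

lemma image_glue_mem_not {x y : V} {σ : Finset V} (hx : x ∈ σ) (hy : y ∉ σ) :
    σ.image (fun v => if v = x ∨ v = y then y else v) = insert y (σ.erase x) := by
  ext a
  simp only [Finset.mem_image, Finset.mem_insert, Finset.mem_erase]
  constructor
  · rintro ⟨v, hv, rfl⟩
    by_cases h : v = x ∨ v = y
    · rw [if_pos h]; exact Or.inl rfl
    · rw [if_neg h]; exact Or.inr ⟨(not_or.mp h).1, hv⟩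
  · rintro (rfl | ⟨hax, ha⟩)
    · exact ⟨x, hx, by simp⟩
    · exact ⟨a, ha, by rw [if_neg (not_or.mpr ⟨hax, fun h => hy (by rwa [← h])⟩)]⟩

lemma image_glue_mem_mem {x y : V} {σ : Finset V} (hx : x ∈ σ) (hy : y ∈ σ) (hxy : x ≠ y) :
    σ.image (fun v => if v = x ∨ v = y then y else v) = σ.erase x := by
  ext a
  simp only [Finset.mem_image, Finset.mem_erase]
  constructor
  · rintro ⟨v, hv, rfl⟩
    by_cases h : v = x ∨ v = y
    · rw [if_pos h]; exact ⟨Ne.symm hxy, hy⟩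
    · rw [if_neg h]; exact ⟨(not_or.mp h).1, hv⟩
  · rintro ⟨hax, ha⟩
    by_cases hay : a = y
    · exact ⟨x, hx, by rw [if_pos (Or.inl rfl)]; exact hay.symm⟩
    · exact ⟨a, ha, by rw [if_neg (not_or.mpr ⟨hax, hay⟩)]⟩

/-- The key cone identity: gluing `x` onto `y` changes a chain of `(p+1)`-sets by the
boundary of the cone (with apex `y`) over the star of `x`, up to an `insert y`-image
of the boundary. -/
lemma cone_identity (p : ℕ) (x y : V) (hxy : x ≠ y) (c : Finset V →₀ ZMod 2)
    (hcard : ∀ σ ∈ c.support, σ.card = p + 1) :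
    c + pushL (fun v => if v = x ∨ v = y then y else v) p c
      + bdry V ((Finsupp.lmapDomain (ZMod 2) (ZMod 2) (fun σ : Finset V => insert y σ))
          ((filterL (fun σ => x ∈ σ ∧ y ∉ σ)) c))
    = (filterL (fun τ : Finset V => τ.card = p + 1))
        ((Finsupp.lmapDomain (ZMod 2) (ZMod 2) (fun σ : Finset V => insert y σ))
          ((filterL (fun τ : Finset V => x ∈ τ)) (bdry V c))) := by
  set g : V → V := fun v => if v = x ∨ v = y then y else v with hg
  set F : (Finset V →₀ ZMod 2) →ₗ[ZMod 2] (Finset V →₀ ZMod 2) :=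
    LinearMap.id + pushL g p
      + (bdry V).comp ((Finsupp.lmapDomain (ZMod 2) (ZMod 2)
          (fun σ : Finset V => insert y σ)).comp
          (filterL (fun σ => x ∈ σ ∧ y ∉ σ))) with hF
  set G : (Finset V →₀ ZMod 2) →ₗ[ZMod 2] (Finset V →₀ ZMod 2) :=
    (filterL (fun τ : Finset V => τ.card = p + 1)).comp
      ((Finsupp.lmapDomain (ZMod 2) (ZMod 2) (fun σ : Finset V => insert y σ)).comp
        ((filterL (fun τ : Finset V => x ∈ τ)).comp (bdry V))) with hG
  have happ : ∀ c : Finset V →₀ ZMod 2, F c = c + pushL g p c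
      + bdry V ((Finsupp.lmapDomain (ZMod 2) (ZMod 2) (fun σ : Finset V => insert y σ))
          ((filterL (fun σ => x ∈ σ ∧ y ∉ σ)) c)) ∧
      G c = (filterL (fun τ : Finset V => τ.card = p + 1))
        ((Finsupp.lmapDomain (ZMod 2) (ZMod 2) (fun σ : Finset V => insert y σ))
          ((filterL (fun τ : Finset V => x ∈ τ)) (bdry V c))) := by
    intro c
    constructor
    · rw [hF]
      simp only [LinearMap.add_apply, LinearMap.comp_apply, LinearMap.id_apply]
    · rw [hG]
      simp only [LinearMap.comp_apply]
  have hFG : ∀ σ : Finset V, σ.card = p + 1 →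
      F (Finsupp.single σ 1) = G (Finsupp.single σ 1) := by
    intro σ hσ
    rw [(happ _).1, (happ _).2, bdry_single]
    have hfilterbd : (filterL (fun τ : Finset V => x ∈ τ))
        (∑ v ∈ σ, Finsupp.single (σ.erase v) (1 : ZMod 2)) =
        if x ∈ σ then ∑ v ∈ σ.erase x, Finsupp.single (σ.erase v) (1 : ZMod 2) else 0 := by
      rw [map_sum]
      split_ifs with hx
      · rw [← Finset.sum_erase (a := x)
          (f := fun v => (filterL (fun τ : Finset V => x ∈ τ))
            (Finsupp.single (σ.erase v) (1 : ZMod 2))) σ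
          (by beta_reduce; rw [filterL_single, if_neg (Finset.notMem_erase x σ)])]
        refine Finset.sum_congr rfl fun v hv => ?_
        rw [filterL_single,
          if_pos (Finset.mem_erase.mpr ⟨fun h => (Finset.mem_erase.mp hv).1 h.symm, hx⟩)]
      · refine Finset.sum_eq_zero fun v _ => ?_
        rw [filterL_single, if_neg (fun hmem => hx (Finset.mem_of_mem_erase hmem))]
    rw [hfilterbd]
    by_cases hx : x ∈ σ
    · rw [if_pos hx, map_sum, map_sum]
      by_cases hy : y ∈ σ
      · -- Case 3 : x ∈ σ, y ∈ σ
        rw [filterL_single, if_neg (by simp [hx, hy]), map_zero, map_zero, add_zero,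
          pushL_single, image_glue_mem_mem hx hy hxy,
          if_neg (by rw [Finset.card_erase_of_mem hx, hσ]; omega), add_zero]
        rw [Finset.sum_congr rfl (fun v hv => by rw [mapDomL_single] :
          ∀ v ∈ σ.erase x, (filterL (fun τ : Finset V => τ.card = p + 1))
              ((Finsupp.lmapDomain (ZMod 2) (ZMod 2) (fun σ : Finset V => insert y σ))
                (Finsupp.single (σ.erase v) (1 : ZMod 2)))
            = (filterL (fun τ : Finset V => τ.card = p + 1))
                (Finsupp.single (insert y (σ.erase v)) (1 : ZMod 2)))]
        rw [Finset.sum_eq_single_of_mem y (Finset.mem_erase.mpr ⟨Ne.symm hxy, hy⟩)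
          (fun b hb hby => by
            beta_reduce
            rw [Finset.insert_eq_self.mpr (Finset.mem_erase.mpr ⟨Ne.symm hby, hy⟩),
              filterL_single,
              if_neg (by rw [Finset.card_erase_of_mem (Finset.mem_of_mem_erase hb), hσ]; omega)])]
        rw [Finset.insert_erase hy, filterL_single, if_pos hσ]
      · -- Case 2 : x ∈ σ, y ∉ σ
        rw [filterL_single, if_pos ⟨hx, hy⟩, mapDomL_single, bdry_single,
          pushL_single, image_glue_mem_not hx hy,
          if_pos (by
            rw [Finset.card_insert_of_notMem (fun h => hy (Finset.mem_of_mem_erase h)),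
              Finset.card_erase_of_mem hx, hσ]; omega)]
        rw [Finset.sum_insert hy, Finset.erase_insert hy,
          Finset.sum_congr rfl (fun v hv =>
            by rw [Finset.erase_insert_of_ne (fun h : y = v => hy (by rwa [h]))] :
            ∀ v ∈ σ, Finsupp.single ((insert y σ).erase v) (1 : ZMod 2)
              = Finsupp.single (insert y (σ.erase v)) (1 : ZMod 2)),
          ← Finset.add_sum_erase σ
            (fun v => Finsupp.single (insert y (σ.erase v)) (1 : ZMod 2)) hx]
        rw [Finset.sum_congr rfl (fun v hv => by
            rw [mapDomL_single, filterL_single,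
              if_pos (by
                rw [Finset.card_insert_of_notMem (fun h => hy (Finset.mem_of_mem_erase h)),
                  Finset.card_erase_of_mem (Finset.mem_of_mem_erase hv), hσ]; omega)] :
          ∀ v ∈ σ.erase x, (filterL (fun τ : Finset V => τ.card = p + 1))
              ((Finsupp.lmapDomain (ZMod 2) (ZMod 2) (fun σ : Finset V => insert y σ))
                (Finsupp.single (σ.erase v) (1 : ZMod 2)))
            = Finsupp.single (insert y (σ.erase v)) (1 : ZMod 2))]
        generalize Finsupp.single σ (1 : ZMod 2) = sσ
        generalize Finsupp.single (insert y (σ.erase x)) (1 : ZMod 2) = sE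
        generalize (∑ v ∈ σ.erase x,
          Finsupp.single (insert y (σ.erase v)) (1 : ZMod 2)) = S
        rw [show sσ + sE + (sσ + (sE + S)) = (sσ + sσ) + ((sE + sE) + S) from by abel,
          addSelf, addSelf, zero_add, zero_add]
    · -- Case 1 : x ∉ σ
      rw [if_neg hx, filterL_single, if_neg (by simp [hx])]
      simp only [map_zero, add_zero]
      rw [pushL_single, image_glue_not_mem hx, if_pos hσ, addSelf]
  have hle : Finsupp.supported (ZMod 2) (ZMod 2) {σ : Finset V | σ.card = p + 1} ≤
      LinearMap.eqLocus F G := by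
    rw [Finsupp.supported_eq_span_single, Submodule.span_le]
    rintro _ ⟨σ, hσ, rfl⟩
    exact hFG σ hσ
  have hc : c ∈ Finsupp.supported (ZMod 2) (ZMod 2) {σ : Finset V | σ.card = p + 1} :=
    (Finsupp.mem_supported (ZMod 2) c).mpr (fun σ hσ => hcard σ hσ)
  have hFGc : F c = G c := hle hc
  rw [(happ c).1, (happ c).2] at hFGc
  exact hFGc

end Glue

section Main
variable {V : Type*} [DecidableEq V]

lemma filterL_mem_support {pr : Finset V → Prop} {c : Finset V →₀ ZMod 2} {τ : Finset V}
    (hτ : τ ∈ (filterL pr c).support) : τ ∈ c.support ∧ pr τ := by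
  rw [filterL_apply, Finsupp.support_filter, Finset.mem_filter] at hτ
  exact hτ

lemma pushL_fixed (f : V → V) (p : ℕ) (c : Finset V →₀ ZMod 2)
    (hfix : ∀ σ ∈ c.support, ∀ v ∈ σ, f v = v)
    (hcard : ∀ σ ∈ c.support, σ.card = p + 1) : pushL f p c = c := by
  unfold pushL
  rw [LinearMap.comp_apply, Finsupp.lmapDomain_apply]
  have h1 : Finsupp.mapDomain (fun σ : Finset V => σ.image f) c = Finsupp.mapDomain id c :=
    Finsupp.mapDomain_congr (fun σ hσ => by
      simp only [id_eq]
      rw [Finset.image_congr (g := id) (fun v hv => hfix σ hσ v hv), Finset.image_id])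
  rw [h1, Finsupp.mapDomain_id]
  ext τ
  rw [filterL_apply, Finsupp.filter_apply]
  split_ifs with h
  · rfl
  · by_cases hτ : τ ∈ c.support
    · exact absurd (hcard τ hτ) h
    · exact (Finsupp.notMem_support_iff.mp hτ).symm

lemma pushL_support {W : Type*} [DecidableEq W] (f : V → W) (p : ℕ) (c : Finset V →₀ ZMod 2)
    (τ : Finset W) (hτ : τ ∈ (pushL f p c).support) :
    τ.card = p + 1 ∧ ∃ σ ∈ c.support, τ = σ.image f := by
  unfold pushL at hτ
  rw [LinearMap.comp_apply] at hτ
  obtain ⟨hτ1, hτ2⟩ := filterL_mem_support hτ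
  rw [Finsupp.lmapDomain_apply] at hτ1
  refine ⟨hτ2, ?_⟩
  have h := Finsupp.mapDomain_support hτ1
  rw [Finset.mem_image] at h
  obtain ⟨σ, hσ, hh⟩ := h
  exact ⟨σ, hσ, hh.symm⟩

lemma pushL_comp {W X : Type*} [DecidableEq W] [DecidableEq X]
    (f : W → X) (g : V → W) (p : ℕ) (c : Finset V →₀ ZMod 2)
    (hcard : ∀ σ ∈ c.support, σ.card = p + 1) :
    pushL f p (pushL g p c) = pushL (fun v => f (g v)) p c := by
  have hFG : ∀ σ : Finset V, σ.card = p + 1 →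
      ((pushL f p).comp (pushL g p)) (Finsupp.single σ 1) =
        pushL (fun v => f (g v)) p (Finsupp.single σ 1) := by
    intro σ hσ
    have himg : (σ.image g).image f = σ.image (fun v => f (g v)) := by
      rw [Finset.image_image]; rfl
    rw [LinearMap.comp_apply, pushL_single, pushL_single]
    by_cases h1 : (σ.image g).card = p + 1
    · rw [if_pos h1, pushL_single, himg]
    · rw [if_neg h1, map_zero]
      rw [if_neg ?hc]
      case hc =>
        have h2 : (σ.image (fun v => f (g v))).card ≤ (σ.image g).card := by
          rw [← himg]; exact Finset.card_image_le
        have h3 : (σ.image g).card ≤ σ.card := Finset.card_image_le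
        rw [hσ] at h3
        omega
  have hle : Finsupp.supported (ZMod 2) (ZMod 2) {σ : Finset V | σ.card = p + 1} ≤
      LinearMap.eqLocus ((pushL f p).comp (pushL g p)) (pushL (fun v => f (g v)) p) := by
    rw [Finsupp.supported_eq_span_single, Submodule.span_le]
    rintro _ ⟨σ, hσ, rfl⟩
    exact hFG σ hσ
  exact hle ((Finsupp.mem_supported (ZMod 2) c).mpr (fun σ hσ => hcard σ hσ))

/-- Main gluing lemma: iteratively snapping the vertices of a cycle `c` onto their
`f`-images changes `c` by a boundary in `K`, provided `K` is downward closed, `f` is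
idempotent on vertices of `K`, and every simplex of `c` together with its `f`-image
lies in `K`. -/
lemma glue_main (p : ℕ) (K : Set (Finset V))
    (hdown : ∀ σ ∈ K, ∀ τ : Finset V, τ ⊆ σ → τ.Nonempty → τ ∈ K)
    (f : V → V) (hfK : ∀ σ ∈ K, ∀ v ∈ σ, f (f v) = f v) :
    ∀ (n : ℕ) (c : Finset V →₀ ZMod 2),
      ((c.support.biUnion id).filter (fun v => f v ≠ v)).card ≤ n →
      bdry V c = 0 →
      (∀ σ ∈ c.support, σ.card = p + 1 ∧ σ ∪ σ.image f ∈ K) →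
      c + pushL f p c ∈ bdriesIn K p := by
  have hfixed : ∀ c : Finset V →₀ ZMod 2,
      ((c.support.biUnion id).filter (fun v => f v ≠ v)).card = 0 →
      (∀ σ ∈ c.support, σ.card = p + 1 ∧ σ ∪ σ.image f ∈ K) →
      c + pushL f p c ∈ bdriesIn K p := by
    intro c hcard0 hsupp
    have hfix : ∀ σ ∈ c.support, ∀ v ∈ σ, f v = v := by
      intro σ hσ v hv
      by_contra hne
      have hmem : v ∈ (c.support.biUnion id).filter (fun v => f v ≠ v) :=
        Finset.mem_filter.mpr ⟨Finset.mem_biUnion.mpr ⟨σ, hσ, hv⟩, hne⟩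
      rw [Finset.card_eq_zero] at hcard0
      rw [hcard0] at hmem
      exact absurd hmem (Finset.notMem_empty v)
    rw [pushL_fixed f p c hfix (fun σ hσ => (hsupp σ hσ).1), addSelf]
    exact Submodule.zero_mem _
  intro n
  induction n with
  | zero =>
      intro c hbad hcyc hsupp
      exact hfixed c (Nat.le_zero.mp hbad) hsupp
  | succ n ih =>
      intro c hbad hcyc hsupp
      by_cases hB : ((c.support.biUnion id).filter (fun v => f v ≠ v)).card = 0
      · exact hfixed c hB hsupp
      · obtain ⟨x, hxmem⟩ := Finset.card_pos.mp (Nat.pos_of_ne_zero hB)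
        obtain ⟨hxV, hfx⟩ := Finset.mem_filter.mp hxmem
        obtain ⟨σ₀, hσ₀, hxσ₀⟩ := Finset.mem_biUnion.mp hxV
        rw [id_eq] at hxσ₀
        set y := f x with hy
        have hxy : x ≠ y := fun h => hfx h.symm
        have hKσ₀ : σ₀ ∪ σ₀.image f ∈ K := (hsupp σ₀ hσ₀).2
        have hfy : f y = y := hfK _ hKσ₀ x (Finset.mem_union_left _ hxσ₀)
        set g : V → V := fun v => if v = x ∨ v = y then y else v with hg
        set D : Finset V →₀ ZMod 2 :=
          (Finsupp.lmapDomain (ZMod 2) (ZMod 2) (fun σ : Finset V => insert y σ))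
            ((filterL (fun σ => x ∈ σ ∧ y ∉ σ)) c) with hD
        have hkey := cone_identity p x y hxy c (fun σ hσ => (hsupp σ hσ).1)
        rw [hcyc] at hkey
        simp only [map_zero] at hkey
        -- hkey : c + pushL g p c + bdry V D = 0
        set c' := pushL g p c with hc'def
        have hc' : c' = c + bdry V D := by
          have h3 := congrArg (fun z => z + (c + bdry V D)) hkey
          simp only [zero_add] at h3
          rw [show c + (pushL g p) c + bdry V D + (c + bdry V D)
              = (pushL g p) c + (c + c) + (bdry V D + bdry V D) from by abel,
            addSelf, addSelf, add_zero, add_zero] at h3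
          exact h3
        have hDchain : D ∈ chainsIn K (p + 1) := by
          rw [chainsIn, Finsupp.mem_supported]
          intro τ hτ
          rw [Finset.mem_coe] at hτ
          rw [hD, Finsupp.lmapDomain_apply] at hτ
          have h := Finsupp.mapDomain_support hτ
          rw [Finset.mem_image] at h
          obtain ⟨σ, hσ, hτeq⟩ := h
          obtain ⟨hσc, hxσ, hyσ⟩ := filterL_mem_support hσ
          have hcardσ := (hsupp σ hσc).1
          have hsub : insert y σ ⊆ σ ∪ σ.image f := by
            intro a ha
            rw [Finset.mem_insert] at ha
            rcases ha with rfl | ha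
            · exact Finset.mem_union_right _ (Finset.mem_image.mpr ⟨x, hxσ, hy.symm⟩)
            · exact Finset.mem_union_left _ ha
          constructor
          · rw [← hτeq]
            exact hdown _ (hsupp σ hσc).2 _ hsub ⟨y, Finset.mem_insert_self y σ⟩
          · rw [← hτeq, Finset.card_insert_of_notMem hyσ, hcardσ]
        have hBD : bdry V D ∈ bdriesIn K p := Submodule.mem_map.mpr ⟨D, hDchain, rfl⟩
        have hcyc' : bdry V c' = 0 := by
          rw [hc', map_add, hcyc, zero_add, bdry_bdry]
        have hsupp' : ∀ τ ∈ c'.support, τ.card = p + 1 ∧ τ ∪ τ.image f ∈ K := by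
          intro τ hτ
          obtain ⟨hcardτ, σ, hσ, hτeq⟩ := pushL_support g p c τ hτ
          refine ⟨hcardτ, ?_⟩
          have hσK := (hsupp σ hσ).2
          have hsub : τ ∪ τ.image f ⊆ σ ∪ σ.image f := by
            intro a ha
            rw [Finset.mem_union] at ha ⊢
            rcases ha with ha | ha
            · rw [hτeq, Finset.mem_image] at ha
              obtain ⟨u, hu, rfl⟩ := ha
              by_cases h : u = x ∨ u = y
              · rw [hg]
                simp only [if_pos h]
                rcases h with rfl | rfl
                · exact Or.inr (Finset.mem_image.mpr ⟨u, hu, hy.symm⟩)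
                · exact Or.inl hu
              · rw [hg]; simp only [if_neg h]; exact Or.inl hu
            · rw [hτeq] at ha
              rw [Finset.image_image, Finset.mem_image] at ha
              obtain ⟨u, hu, rfl⟩ := ha
              right
              rw [Finset.mem_image]
              refine ⟨u, hu, ?_⟩
              have hfg : f (g u) = f u := by
                by_cases h : u = x ∨ u = y
                · rw [hg]; simp only [if_pos h]
                  rcases h with rfl | rfl
                  · rw [hfy, hy]
                  · rfl
                · rw [hg]; simp only [if_neg h]
              simpa only [Function.comp_apply] using hfg.symm
          have hne : (τ ∪ τ.image f).Nonempty := by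
            obtain ⟨a, ha⟩ := Finset.card_pos.mp (by rw [hcardτ]; omega)
            exact ⟨a, Finset.mem_union_left _ ha⟩
          exact hdown _ hσK _ hsub hne
        have hbad' : ((c'.support.biUnion id).filter (fun v => f v ≠ v)).card ≤ n := by
          have hsubbad : (c'.support.biUnion id).filter (fun v => f v ≠ v)
              ⊆ ((c.support.biUnion id).filter (fun v => f v ≠ v)).erase x := by
            intro v hv
            rw [Finset.mem_filter] at hv
            obtain ⟨hvV, hfv⟩ := hv
            rw [Finset.mem_biUnion] at hvV
            obtain ⟨τ, hτ, hvτ⟩ := hvV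
            rw [id_eq] at hvτ
            obtain ⟨_, σ, hσ, hτeq⟩ := pushL_support g p c τ hτ
            rw [hτeq, Finset.mem_image] at hvτ
            obtain ⟨u, hu, hgu⟩ := hvτ
            have hvy : v ≠ y := by
              intro h
              exact hfv (by rw [h, hfy])
            have hune : ¬(u = x ∨ u = y) := by
              intro h
              apply hvy
              rw [← hgu, hg]; simp only [if_pos h]
            have hvu : v = u := by rw [← hgu, hg]; simp only [if_neg hune]
            rw [Finset.mem_erase]
            refine ⟨by rw [hvu]; exact fun h => hune (Or.inl h), ?_⟩
            refine Finset.mem_filter.mpr ⟨Finset.mem_biUnion.mpr ⟨σ, hσ, ?_⟩, hfv⟩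
            rw [id_eq, hvu]; exact hu
          have h1 := Finset.card_le_card hsubbad
          rw [Finset.card_erase_of_mem hxmem] at h1
          have h2 : 1 ≤ ((c.support.biUnion id).filter (fun v => f v ≠ v)).card :=
            Finset.card_pos.mpr ⟨x, hxmem⟩
          omega
        have hIH := ih c' hbad' hcyc' hsupp'
        have hpp : pushL f p c' = pushL f p c := by
          rw [hc'def, pushL_comp f g p c (fun σ hσ => (hsupp σ hσ).1)]
          unfold pushL
          simp only [LinearMap.comp_apply, Finsupp.lmapDomain_apply]
          congr 1
          apply Finsupp.mapDomain_congr
          intro σ hσ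
          apply Finset.image_congr
          intro v hv
          show f (g v) = f v
          by_cases h : v = x ∨ v = y
          · rw [hg]; simp only [if_pos h]
            rcases h with rfl | rfl
            · rw [hfy, hy]
            · rfl
          · rw [hg]; simp only [if_neg h]
        rw [hpp] at hIH
        have hfinal : c + pushL f p c = bdry V D + (c' + pushL f p c) := by
          rw [hc']
          rw [show bdry V D + (c + bdry V D + pushL f p c)
              = c + pushL f p c + (bdry V D + bdry V D) from by abel, addSelf, add_zero]
        rw [hfinal]
        exact Submodule.add_mem _ hBD hIH

end Main

/-- two preimage `p`-cycles in `Čech_1(A)` of the same `p`-cycle of the snap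
complex `Q_1` are homologous in `Čech_{1+ε}(A)`. -/
theorem homologous_preimages
    (d : ℕ) (ε : ℝ) (hε : 0 < ε)
    (Ψ : Set (Set (EuclideanSpace ℝ (Fin d)))) (hΨ : IsPartitionMesh d ε Ψ)
    (q : EuclideanSpace ℝ (Fin d) → Set (EuclideanSpace ℝ (Fin d)))
    (hq : ∀ x, q x ∈ Ψ ∧ x ∈ q x)
    (A : Finset (EuclideanSpace ℝ (Fin d))) (p : ℕ)
    (γ γ' : Finset (EuclideanSpace ℝ (Fin d)) →₀ ZMod 2)
    (hγ : γ ∈ cyclesIn (cech d 1 A) p) (hγ' : γ' ∈ cyclesIn (cech d 1 A) p)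
    (α : Finset (Set (EuclideanSpace ℝ (Fin d))) →₀ ZMod 2)
    (hα : α ∈ cyclesIn {τ | ∃ σ ∈ cech d 1 A, τ = σ.image q} p)
    (him : pushChain q p γ = α) (him' : pushChain q p γ' = α) :
    γ + γ' ∈ bdriesIn (cech d (1 + ε) A) p := by
  obtain ⟨hγch, hγker⟩ := Submodule.mem_inf.mp hγ
  obtain ⟨hγ'ch, hγ'ker⟩ := Submodule.mem_inf.mp hγ'
  have hγsupp := (Finsupp.mem_supported (ZMod 2) γ).mp hγch
  have hγ'supp := (Finsupp.mem_supported (ZMod 2) γ').mp hγ'ch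
  have hγcyc : bdry _ γ = 0 := LinearMap.mem_ker.mp hγker
  have hγ'cyc : bdry _ γ' = 0 := LinearMap.mem_ker.mp hγ'ker
  let r' : Set (EuclideanSpace ℝ (Fin d)) → EuclideanSpace ℝ (Fin d) :=
    fun ψ => if h : ∃ a, a ∈ A ∧ q a = ψ then h.choose else 0
  let f : EuclideanSpace ℝ (Fin d) → EuclideanSpace ℝ (Fin d) := fun v => r' (q v)
  have hfspec : ∀ v ∈ A, f v ∈ A ∧ q (f v) = q v := by
    intro v hv
    have h : ∃ a, a ∈ A ∧ q a = q v := ⟨v, hv, rfl⟩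
    have hd : f v = h.choose := dif_pos h
    rw [hd]
    exact ⟨h.choose_spec.1, h.choose_spec.2⟩
  have hidem : ∀ v ∈ A, f (f v) = f v := by
    intro v hv
    show r' (q (f v)) = f v
    rw [(hfspec v hv).2]
  set K := cech d (1 + ε) A with hK
  have hdown : ∀ σ ∈ K, ∀ τ : Finset (EuclideanSpace ℝ (Fin d)), τ ⊆ σ → τ.Nonempty → τ ∈ K := by
    intro σ hσ τ hsub hne
    obtain ⟨_, hsubA, z, hz⟩ := hσ
    exact ⟨hne, fun a ha => hsubA (hsub ha), z, fun b hb => hz b (hsub hb)⟩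
  have hfK : ∀ σ ∈ K, ∀ v ∈ σ, f (f v) = f v := by
    intro σ hσ v hv
    exact hidem v (hσ.2.1 hv)
  have hmove : ∀ v ∈ A, dist (f v) v ≤ ε := by
    intro v hv
    have h1 : f v ∈ q v := by rw [← (hfspec v hv).2]; exact (hq (f v)).2
    have h2 : v ∈ q v := (hq v).2
    have h4 : edist (f v) v ≤ ENNReal.ofReal ε :=
      le_trans (EMetric.edist_le_diam_of_mem h1 h2) (hΨ.2 _ (hq v).1)
    rw [edist_dist] at h4
    exact (ENNReal.ofReal_le_ofReal_iff hε.le).mp h4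
  have hsuppK : ∀ c : Finset (EuclideanSpace ℝ (Fin d)) →₀ ZMod 2,
      ↑c.support ⊆ {σ : Finset (EuclideanSpace ℝ (Fin d)) | σ ∈ cech d 1 A ∧ σ.card = p + 1} →
      ∀ σ ∈ c.support, σ.card = p + 1 ∧ σ ∪ σ.image f ∈ K := by
    intro c hc σ hσ
    obtain ⟨⟨hne, hsubA, z, hz⟩, hcard⟩ := hc hσ
    refine ⟨hcard, ?_, ?_, z, ?_⟩
    · obtain ⟨a, ha⟩ := hne
      exact ⟨a, Finset.mem_union_left _ ha⟩
    · intro a ha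
      rw [Finset.mem_coe, Finset.mem_union] at ha
      rcases ha with ha | ha
      · exact hsubA ha
      · rw [Finset.mem_image] at ha
        obtain ⟨u, hu, rfl⟩ := ha
        exact Finset.mem_coe.mpr (hfspec u (hsubA hu)).1
    · intro b hb
      rw [Finset.mem_union] at hb
      rcases hb with hb | hb
      · linarith [hz b hb]
      · rw [Finset.mem_image] at hb
        obtain ⟨u, hu, rfl⟩ := hb
        calc dist (f u) z ≤ dist (f u) u + dist u z := dist_triangle _ _ _
          _ ≤ ε + 1 := add_le_add (hmove u (hsubA hu)) (hz u hu)
          _ = 1 + ε := by ring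
  have hγK := hsuppK γ hγsupp
  have hγ'K := hsuppK γ' hγ'supp
  have hB1 := glue_main p K hdown f hfK _ γ le_rfl hγcyc hγK
  have hB2 := glue_main p K hdown f hfK _ γ' le_rfl hγ'cyc hγ'K
  have hcomp1 : pushL f p γ = pushL r' p α := by
    have h := pushL_comp r' q p γ (fun σ hσ => (hγK σ hσ).1)
    rw [pushL_apply q, him] at h
    exact h.symm
  have hcomp2 : pushL f p γ' = pushL r' p α := by
    have h := pushL_comp r' q p γ' (fun σ hσ => (hγ'K σ hσ).1)
    rw [pushL_apply q, him'] at h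
    exact h.symm
  have hpe : pushL f p γ = pushL f p γ' := by rw [hcomp1, hcomp2]
  have hsum := Submodule.add_mem _ hB1 hB2
  rw [hpe] at hsum
  rw [show γ + pushL f p γ' + (γ' + pushL f p γ')
      = (γ + γ') + (pushL f p γ' + pushL f p γ') from by abel, addSelf, add_zero] at hsum
  exact hsum
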